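/- Every surjective partial map between finite sets, i.e. every morphism of the category F_o, can be written as a finite composition of morphisms of the following three types: (1) the inert map î : ⟨n⟩ → ⟨n−1⟩ undefined exactly at i and order-preserving elsewhere; (2) bijections ⟨n⟩ → ⟨n⟩; (3) the active map μ_{k,l} : ⟨k+l⟩ → ⟨1+l⟩ sending 1,…,k all to 1 and k+j to 1+j for 1 ≤ j ≤ l. -/

import Mathlib

open CategoryTheory

/-- Objects of Segal's category `F`: the natural number `n` stands for the
finite set `⟨n⟩ = {1,…,n}` (with `⟨0⟩ = ∅`). -/
abbrev FCat : Type := ℕ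

/-- A partial map `⟨m⟩ → ⟨n⟩` is encoded as a function `Fin m → Option (Fin n)`
(`none` on the complement of the domain of definition). -/
instance : CategoryStruct FCat where
  Hom m n := Fin m → Option (Fin n)
  id _ := fun i => some i
  comp f g := fun i => (f i).bind g

/-- The category `F` of finite sets `⟨n⟩` and partial maps; composition of
partial maps is composition on the largest domain where it is defined. -/
instance : Category FCat where
  id_comp _ := rfl
  comp_id f := by
    funext i
    show (f i).bind (fun j => some j) = f i
    cases f i <;> rfl
  assoc f g h := by
    funext i
    show ((f i).bind g).bind h = (f i).bind (fun j => (g j).bind h)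
    cases f i <;> rfl

/-- The underlying `Option`-valued function of a morphism of `F`. -/
def FCat.app {m n : FCat} (f : m ⟶ n) : Fin m → Option (Fin n) := f

/-- A morphism of `F` is inert if the preimage of each element of the codomain
consists of exactly one element. -/
def FCat.Inert {m n : FCat} (f : m ⟶ n) : Prop :=
  ∀ j : Fin n, ∃! i : Fin m, FCat.app f i = some j

/-- A morphism of `F` is active if its domain of definition is the whole source. -/
def FCat.Active {m n : FCat} (f : m ⟶ n) : Prop :=
  ∀ i : Fin m, FCat.app f i ≠ none

/-- The inert map `î : ⟨n+1⟩ → ⟨n⟩` which is undefined exactly at `i` and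
order-preserving elsewhere. -/
def FCat.hatMap (n : ℕ) (i : Fin (n + 1)) : ((n + 1 : ℕ) : FCat) ⟶ (n : FCat) :=
  fun k =>
    if h : (k : ℕ) < (i : ℕ) then
      some ⟨(k : ℕ), by have hk := k.isLt; have hi := i.isLt; omega⟩
    else if h' : (k : ℕ) = (i : ℕ) then none
    else some ⟨(k : ℕ) - 1, by have hk := k.isLt; omega⟩

/-- The bijection `⟨n⟩ → ⟨n⟩` induced by a permutation. -/
def FCat.permMap (n : ℕ) (e : Equiv.Perm (Fin n)) : (n : FCat) ⟶ (n : FCat) :=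
  fun k => some (e k)

/-- The active map `μ_{k,l} : ⟨k+l⟩ → ⟨1+l⟩` sending `1,…,k` all to `1` and
`k+j` to `1+j` for `1 ≤ j ≤ l`. -/
def FCat.muMap (k l : ℕ) : ((k + l : ℕ) : FCat) ⟶ ((1 + l : ℕ) : FCat) :=
  fun j =>
    if h : (j : ℕ) < k then some ⟨0, by omega⟩
    else some ⟨(j : ℕ) - k + 1, by have hj := j.isLt; omega⟩

/-- The class of morphisms of `F` which are finite composites of morphisms of
the three types: (1) the inert maps `î`, (2) bijections, (3) the active maps
`μ_{k,l}`. -/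
inductive FCat.Gen : ∀ {m n : FCat}, (m ⟶ n) → Prop
  | hat (n : ℕ) (i : Fin (n + 1)) : FCat.Gen (FCat.hatMap n i)
  | perm (n : ℕ) (e : Equiv.Perm (Fin n)) : FCat.Gen (FCat.permMap n e)
  | mu (k l : ℕ) : FCat.Gen (FCat.muMap k l)
  | comp {m n p : FCat} (f : m ⟶ n) (g : n ⟶ p) :
      FCat.Gen f → FCat.Gen g → FCat.Gen (f ≫ g)

/-! Induction on the size of the source. A surjective partial map undefined at `i` is `î`
followed by its restriction along `i.succAbove`. A total map identifying two points becomes,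
after a permutation moving them to `1` and `2`, constant on `{1, 2}` and so factors through
`μ_{2,l}`. A total injective surjective map is a bijection. In each factorisation the second
factor is again surjective and has a smaller source. -/

namespace FCat

/-- Surjectivity of a partial map; these are the morphisms of `F_o`. -/
def Surjective {m n : FCat} (f : m ⟶ n) : Prop :=
  ∀ j : Fin n, ∃ i : Fin m, FCat.app f i = some j

@[simp]
lemma comp_apply {m n p : FCat} (f : m ⟶ n) (g : n ⟶ p) (i : Fin m) :
    (f ≫ g) i = (f i).bind g :=
  rfl

lemma Surjective.of_comp {m n p : FCat} {f : m ⟶ n} {g : n ⟶ p} (h : Surjective (f ≫ g)) :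
    Surjective g := by
  intro j
  obtain ⟨i, hi⟩ := h j
  obtain ⟨k, -, hk⟩ := Option.bind_eq_some_iff.mp hi
  exact ⟨k, hk⟩

@[simp]
lemma hatMap_self (n : ℕ) (i : Fin (n + 1)) : hatMap n i i = none := by
  simp [hatMap]

@[simp]
lemma hatMap_succAbove (n : ℕ) (i : Fin (n + 1)) (j : Fin n) :
    hatMap n i (i.succAbove j) = some j := by
  rcases lt_or_ge j.castSucc i with h | h
  · rw [Fin.succAbove_of_castSucc_lt _ _ h]
    simp_all [hatMap, Fin.lt_def]
  · rw [Fin.succAbove_of_le_castSucc _ _ h]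
    simp only [hatMap, Fin.val_succ]
    rw [Fin.le_def, Fin.val_castSucc] at h
    rw [dif_neg (by omega), dif_neg (by omega)]
    simp

lemma hatMap_comp_succAbove {n p : ℕ} (f : ((n + 1 : ℕ) : FCat) ⟶ p) (i : Fin (n + 1))
    (hi : f i = none) : hatMap n i ≫ (fun j => f (i.succAbove j)) = f := by
  funext k
  rw [comp_apply]
  obtain rfl | hk := eq_or_ne k i
  · simp [hi]
  · obtain ⟨j, rfl⟩ := Fin.exists_succAbove_eq hk
    simp

lemma exists_muMap_comp_eq {k l p : ℕ} (hk : 0 < k) (f : ((k + l : ℕ) : FCat) ⟶ p)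
    (hf : ∀ a b : Fin (k + l), (a : ℕ) < k → (b : ℕ) < k → f a = f b) :
    ∃ g : ((1 + l : ℕ) : FCat) ⟶ p, muMap k l ≫ g = f := by
  refine ⟨fun j => if (j : ℕ) = 0 then f ⟨0, by omega⟩ else f ⟨j + k - 1, by omega⟩, ?_⟩
  funext a
  by_cases ha : (a : ℕ) < k
  · simp [muMap, ha, hf ⟨0, by omega⟩ a hk ha]
  · simp only [comp_apply, muMap, dif_neg ha, Option.bind_some]
    rw [if_neg (by omega)]
    congr
    omega

lemma permMap_symm_comp_permMap {n : ℕ} (e : Equiv.Perm (Fin n)) :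
    permMap n e.symm ≫ permMap n e = 𝟙 (n : FCat) := by
  funext i
  exact congrArg some (e.apply_symm_apply i)

lemma exists_eq_permMap_comp_muMap_comp {l p : ℕ} {f : ((2 + l : ℕ) : FCat) ⟶ p}
    {a b : Fin (2 + l)} (hab : a ≠ b) (hf : f a = f b) :
    ∃ (e : Equiv.Perm (Fin (2 + l))) (g : ((1 + l : ℕ) : FCat) ⟶ p),
      f = permMap _ e ≫ muMap 2 l ≫ g := by
  obtain ⟨σ, hσa, hσb⟩ := MulAction.is_two_pretransitive_iff.mp
    (Equiv.Perm.isMultiplyPretransitive (Fin (2 + l)) 2)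
    (show (⟨0, by omega⟩ : Fin (2 + l)) ≠ ⟨1, by omega⟩ by simp) hab
  obtain ⟨g, hg⟩ := exists_muMap_comp_eq (l := l) two_pos (permMap _ σ ≫ f) (by
    have h : ∀ z : Fin (2 + l), (z : ℕ) < 2 → (permMap _ σ ≫ f) z = f a := by
      intro z hz
      obtain hz0 | hz1 : z = ⟨0, by omega⟩ ∨ z = ⟨1, by omega⟩ := by
        simp only [Fin.ext_iff]
        omega
      · simpa [permMap, hz0] using congrArg f hσa
      · simpa [permMap, hz1, hf] using congrArg f hσb
    exact fun x y hx hy => (h x hx).trans (h y hy).symm)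
  refine ⟨σ.symm, g, ?_⟩
  rw [hg, ← Category.assoc, permMap_symm_comp_permMap, Category.id_comp]

lemma gen_of_injective {m n : FCat} {f : m ⟶ n} (hinj : Function.Injective f)
    (htot : ∀ i, f i ≠ none) (hsurj : Surjective f) : Gen f := by
  choose f₀ hf₀ using fun i => Option.ne_none_iff_exists'.mp (htot i)
  obtain rfl : f = fun i => some (f₀ i) := funext hf₀
  have hbij : Function.Bijective f₀ :=
    ⟨fun a b h => hinj (congrArg some h),
      fun j => (hsurj j).imp fun _ h => Option.some_injective _ h⟩
  obtain rfl : m = n := by simpa using Fintype.card_of_bijective hbij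
  exact Gen.perm m (Equiv.ofBijective f₀ hbij)

end FCat

/-- Every surjective partial map between finite sets (morphism of `F_o`) is a
finite composite of inert maps `î`, bijections, and active maps `μ_{k,l}`. -/
theorem statement17 (m n : FCat) (f : m ⟶ n)
    (hf : ∀ j : Fin n, ∃ i : Fin m, FCat.app f i = some j) :
    FCat.Gen f := by
  change FCat.Surjective f at hf
  induction m using Nat.strong_induction_on generalizing n with
  | _ m ih =>
  by_cases hnone : ∃ i, f i = none
  · obtain ⟨i, hi⟩ := hnone
    obtain ⟨m, rfl⟩ := Nat.exists_eq_succ_of_ne_zero i.pos.ne'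
    rw [← FCat.hatMap_comp_succAbove f i hi] at hf ⊢
    exact .comp _ _ (.hat m i) (ih m m.lt_succ_self _ _ hf.of_comp)
  by_cases hinj : Function.Injective f
  · exact FCat.gen_of_injective hinj (by simpa using hnone) hf
  obtain ⟨a, b, hfab, hab⟩ := Function.not_injective_iff.mp hinj
  obtain ⟨l, rfl⟩ : ∃ l, m = 2 + l := ⟨m - 2, by grind⟩
  obtain ⟨e, g, rfl⟩ := FCat.exists_eq_permMap_comp_muMap_comp hab hfab
  exact .comp _ _ (.perm _ e) (.comp _ _ (.mu 2 l) (ih (1 + l) (by omega) _ _ hf.of_comp.of_comp))
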